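/- arXiv:1206.4042 — 5 statements merged into one kernel-verified Lean document; each statement's English description precedes it below -/
import Mathlib

section
/- Let N : E → E be differentiable with (DN)(x)(N(x)) = 0 for every x ∈ E, let ε : ℝ → ℝ be infinitely differentiable, and let C : ℝ → E satisfy the curve-evolution equation C′(t) = ε(t) • N(C(t)) for all t. Then for every k ≥ 0 and every t, the (k+1)-st derivative of C satisfies C^{(k+1)}(t) = ε^{(k)}(t) • N(C(t)), where ε^{(k)} is the k-th derivative of ε. -/
/-- If `N` is a differentiable vector field whose derivative annihilates `N` itself,
`ε : ℝ → ℝ` is smooth, and `C` satisfies the curve evolution `C′ t = ε t • N (C t)`,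
then `C^{(k+1)} t = ε^{(k)} t • N (C t)` for all `k` and `t`. -/
theorem iteratedDeriv_curve_evolution
    {E : Type*} [NormedAddCommGroup E] [NormedSpace ℝ E]
    (N : E → E) (hN : Differentiable ℝ N)
    (hNN : ∀ x : E, fderiv ℝ N x (N x) = 0)
    (ε : ℝ → ℝ) (hε : ContDiff ℝ (⊤ : ℕ∞) ε)
    (C : ℝ → E) (hC : ∀ t : ℝ, HasDerivAt C (ε t • N (C t)) t) :
    ∀ (k : ℕ) (t : ℝ), iteratedDeriv (k + 1) C t = iteratedDeriv k ε t • N (C t) := by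
  have hNC : ∀ t : ℝ, HasDerivAt (fun s => N (C s)) 0 t := by
    intro t
    have h1 := (hN (C t)).hasFDerivAt.comp_hasDerivAt t (hC t)
    have h1' : HasDerivAt (N ∘ C) 0 t := by simpa [map_smul, hNN] using h1
    exact h1'
  intro k
  induction k with
  | zero =>
    intro t
    simp only [iteratedDeriv_succ, iteratedDeriv_zero]
    exact (hC t).deriv
  | succ k ih =>
    intro t
    have hE : HasDerivAt (iteratedDeriv k ε) (iteratedDeriv (k + 1) ε t) t := by
      rw [iteratedDeriv_succ]
      have hd : Differentiable ℝ (iteratedDeriv k ε) := by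
        rw [iteratedDeriv_eq_iterate]
        have hε' : ContDiff ℝ (⊤ : ℕ∞) ε := hε.of_le (by simp)
        exact (hε'.iterate_deriv k).differentiable (by simp)
      exact (hd t).hasDerivAt
    have hfun : iteratedDeriv (k + 1) C = fun s => iteratedDeriv k ε s • N (C s) :=
      funext fun s => ih s
    rw [iteratedDeriv_succ, hfun]
    have h2 := (hE.smul (hNC t)).deriv
    have h3 : deriv (iteratedDeriv k ε • fun s => N (C s)) t = iteratedDeriv (k + 1) ε t • N (C t) := by
      simpa using h2
    exact h3
end

section
/- Let N : E → E be differentiable with (DN)(x)(N(x)) = 0 for every x, let ε : ℝ → ℝ be infinitely differentiable, and let C : ℝ → E satisfy C′(t) = ε(t) • N(C(t)) for all t. Fix t and suppose C is analytic at t, i.e. C is given by its Taylor series at t on the interval |τ| < R for some R > 0. Then for every τ with |τ| < R, C(t+τ) = C(t) + (τ · ξ(τ)) • N(C(t)), where ξ(τ) = Σ_{k=1}^{∞} (τ^{k−1}/k!) ε^{(k−1)}(t). -/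
/-- If `C` solves the curve evolution `C′ t = ε t • N (C t)` (where the derivative of the
normal field `N` annihilates `N`), and `C` is given by its Taylor series at `t` on
`|τ| < R`, then `C (t + τ) = C t + (τ · ξ τ) • N (C t)` with
`ξ τ = ∑_{k=1}^∞ τ^{k-1}/k! · ε^{(k-1)} t`. -/
theorem curve_evolution_displacement_normal
    {E : Type*} [NormedAddCommGroup E] [NormedSpace ℝ E] [CompleteSpace E]
    (N : E → E) (hN : Differentiable ℝ N)
    (hNN : ∀ x : E, fderiv ℝ N x (N x) = 0)
    (ε : ℝ → ℝ) (hε : ContDiff ℝ (⊤ : ℕ∞) ε)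
    (C : ℝ → E) (hC : ∀ s : ℝ, HasDerivAt C (ε s • N (C s)) s)
    (t : ℝ) (R : ℝ) (hR : 0 < R)
    (hTaylor : ∀ τ : ℝ, |τ| < R →
      HasSum (fun k : ℕ => (τ ^ k / (Nat.factorial k : ℝ)) • iteratedDeriv k C t)
        (C (t + τ))) :
    ∀ τ : ℝ, |τ| < R →
      C (t + τ) = C t +
        (τ * ∑' k : ℕ, τ ^ k / (Nat.factorial (k + 1) : ℝ) * iteratedDeriv k ε t) •
          N (C t) := by
  set v : E := N (C t) with hv
  -- N ∘ C is constant
  have hgderiv : ∀ s : ℝ, HasDerivAt (fun u => N (C u)) 0 s := by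
    intro s
    have h1 : HasDerivAt (fun u => N (C u)) (fderiv ℝ N (C s) (ε s • N (C s))) s :=
      ((hN.differentiableAt).hasFDerivAt).comp_hasDerivAt s (hC s)
    simpa [map_smul, hNN (C s)] using h1
  have hconst : ∀ s : ℝ, N (C s) = v := by
    intro s
    exact is_const_of_deriv_eq_zero (fun u => (hgderiv u).differentiableAt)
      (fun u => (hgderiv u).deriv) s t
  have hC' : ∀ s : ℝ, HasDerivAt C (ε s • v) s := by
    intro s; rw [← hconst s]; exact hC s
  -- iterated derivatives of fun s => ε s • v
  have haux : ∀ k : ℕ, iteratedDeriv k (fun s => ε s • v) = fun s => iteratedDeriv k ε s • v := by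
    intro k
    induction k with
    | zero => simp
    | succ n ih =>
      rw [iteratedDeriv_succ, ih, iteratedDeriv_succ]
      funext s
      exact deriv_smul_const
        ((hε.differentiable_iteratedDeriv n (by exact_mod_cast lt_top_iff_ne_top.2 (by simp))).differentiableAt) v
  have hkey : ∀ k : ℕ, iteratedDeriv (k + 1) C t = iteratedDeriv k ε t • v := by
    intro k
    have hdC : deriv C = fun s => ε s • v := funext fun s => (hC' s).deriv
    rw [iteratedDeriv_succ', hdC, haux k]
  intro τ hτ
  rcases eq_or_ne τ 0 with rfl | hτ0
  · simp
  set g : ℕ → ℝ := fun k => τ ^ k / (Nat.factorial (k + 1) : ℝ) * iteratedDeriv k ε t with hg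
  set f : ℕ → E := fun k => (τ ^ k / (Nat.factorial k : ℝ)) • iteratedDeriv k C t with hf
  have hS : HasSum f (C (t + τ)) := hTaylor τ hτ
  have hf0 : f 0 = C t := by simp [hf]
  have hfk : ∀ k : ℕ, f (k + 1) = (τ * g k) • v := by
    intro k
    simp only [hf, hg, hkey k, smul_smul]
    congr 1
    field_simp [Nat.factorial_succ]
    ring
  have h1 : HasSum (fun n => f (n + 1)) (C (t + τ) - C t) := by
    have := (hasSum_nat_add_iff' (f := f) 1).mpr hS
    simpa [hf0] using this
  rcases eq_or_ne v 0 with hv0 | hv0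
  · have : C (t + τ) - C t = 0 := by
      have h2 : HasSum (fun n => f (n + 1)) 0 := by
        have : (fun n => f (n + 1)) = fun _ => (0 : E) := by
          funext n; rw [hfk n, hv0, smul_zero]
        rw [this]; exact hasSum_zero
      exact (h1.unique h2)
    rw [hv0, smul_zero, add_zero, ← sub_eq_zero]
    exact this
  · obtain ⟨φ, -, hφv⟩ := exists_dual_vector ℝ v (norm_ne_zero_iff.mpr hv0)
    have hφv' : φ v = ‖v‖ := by exact_mod_cast hφv
    have h2 : HasSum (fun n => φ (f (n + 1))) (φ (C (t + τ) - C t)) := φ.hasSum h1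
    have h3 : HasSum (fun n => g n * (τ * ‖v‖)) (φ (C (t + τ) - C t)) := by
      convert h2 using 2 with n
      rw [hfk n, map_smul, smul_eq_mul, hφv']
      ring
    have hc : τ * ‖v‖ ≠ 0 := mul_ne_zero hτ0 (norm_ne_zero_iff.mpr hv0)
    have hgsum : HasSum g (φ (C (t + τ) - C t) / (τ * ‖v‖)) := by
      have := h3.div_const (τ * ‖v‖)
      simpa [mul_div_assoc, div_self hc] using this
    have h4 : HasSum (fun n => (τ * g n) • v) ((τ * ∑' k, g k) • v) := by
      rw [hgsum.tsum_eq]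
      exact (hgsum.mul_left τ).smul_const v
    have h1' : HasSum (fun n => (τ * g n) • v) (C (t + τ) - C t) := by
      simpa only [hfk] using h1
    have h5 : C (t + τ) - C t = (τ * ∑' k, g k) • v := h1'.unique h4
    rw [eq_add_of_sub_eq h5]
    exact add_comm _ _
end

section
/- Let g : E → ℝ be a function whose gradient ∇g is differentiable on an open set U and satisfies the normalization ‖∇g(x)‖ = 1 for all x ∈ U, and let R : E → E be a linear isometry (e.g. a rotation of the plane). Consider the rotated vector field F(x) = R(∇g(x)) driving the Equilibrium Flow. Then for every x ∈ U, taking N = ∇g(x) (the unit normal at a point where the gradient is normal to the curve), the normal-normal component of the Jacobian of F vanishes: ⟨N, (DF)(x)(N)⟩ = 0. Hence J_nn = 0 and the Equilibrium Flow is marginally stable. -/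
/-!
Since `‖∇g‖ = 1` near `x`, differentiating `‖∇g‖² = 1` shows that every column of the Hessian
`H = D(∇g)(x)` is orthogonal to `N = ∇g x`. The Hessian is symmetric, so
`‖H N‖² = ⟪H (H N), N⟫ = 0`, i.e. `H N = 0`; the rotated field `R ∘ ∇g` then has
`D(R ∘ ∇g)(x) N = R (H N) = 0`.
-/

open InnerProductSpace Filter Topology

section

variable {E F : Type*} [NormedAddCommGroup E] [NormedSpace ℝ E]
  [NormedAddCommGroup F] [InnerProductSpace ℝ F]

theorem inner_self_fderiv_eq_zero_of_norm_eventually_const {f : E → F} {x : E} {c : ℝ}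
    (hf : DifferentiableAt ℝ f x) (hc : ∀ᶠ y in 𝓝 x, ‖f y‖ = c) (v : E) :
    ⟪f x, fderiv ℝ f x v⟫_ℝ = 0 := by
  have hconst : (‖f ·‖ ^ 2) =ᶠ[𝓝 x] fun _ => c ^ 2 := by
    filter_upwards [hc] with y hy using by rw [hy]
  have hzero := hf.hasFDerivAt.norm_sq.unique
    ((hasFDerivAt_const (c ^ 2) x).congr_of_eventuallyEq hconst)
  simpa using congrArg (· v) hzero

end

section

variable {E : Type*} [NormedAddCommGroup E] [InnerProductSpace ℝ E] [CompleteSpace E]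
  {g : E → ℝ} {x : E}

theorem differentiableAt_of_gradient_ne_zero (h : gradient g x ≠ 0) : DifferentiableAt ℝ g x :=
  not_imp_comm.mp gradient_eq_zero_of_not_differentiableAt h

theorem inner_fderiv_gradient_comm (hg : ∀ᶠ y in 𝓝 x, DifferentiableAt ℝ g y)
    (hG : DifferentiableAt ℝ (gradient g) x) (v w : E) :
    ⟪fderiv ℝ (gradient g) x v, w⟫_ℝ = ⟪fderiv ℝ (gradient g) x w, v⟫_ℝ := by
  let L := (toDual ℝ E).toContinuousLinearEquiv.toContinuousLinearMap
  have hfderiv : ∀ᶠ y in 𝓝 x, HasFDerivAt g (toDual ℝ E (gradient g y)) y := by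
    filter_upwards [hg] with y hy
    rw [toDual_gradient]
    exact hy.hasFDerivAt
  have hsecond : HasFDerivAt (fun y => toDual ℝ E (gradient g y))
      (L.comp (fderiv ℝ (gradient g) x)) x :=
    L.hasFDerivAt.comp x hG.hasFDerivAt
  simpa [L, toDual_apply_apply] using second_derivative_symmetric_of_eventually hfderiv hsecond v w

theorem fderiv_gradient_apply_gradient_eq_zero (hG : DifferentiableAt ℝ (gradient g) x)
    (hnorm : ∀ᶠ y in 𝓝 x, ‖gradient g y‖ = 1) :
    fderiv ℝ (gradient g) x (gradient g x) = 0 := by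
  set H := fderiv ℝ (gradient g) x
  have hg : ∀ᶠ y in 𝓝 x, DifferentiableAt ℝ g y := by
    filter_upwards [hnorm] with y hy
    exact differentiableAt_of_gradient_ne_zero (by rw [← norm_ne_zero_iff, hy]; exact one_ne_zero)
  have horth : ∀ v, ⟪gradient g x, H v⟫_ℝ = 0 :=
    inner_self_fderiv_eq_zero_of_norm_eventually_const hG hnorm
  refine (inner_self_eq_zero (𝕜 := ℝ)).mp ?_
  rw [inner_fderiv_gradient_comm hg hG, real_inner_comm]
  exact horth _

end

/-- Marginal stability of the Equilibrium Flow: if `∇g` is differentiable on an open set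
`U` with `‖∇g x‖ = 1` on `U`, and `R` is a linear isometry of the plane, then for the
rotated field `F = R ∘ ∇g` and normal `N = ∇g x`, the normal-normal component of the
Jacobian of `F` vanishes: `⟨N, DF(x) N⟩ = 0`, i.e. `J_nn = 0`. -/
theorem equilibrium_flow_marginally_stable
    (g : EuclideanSpace ℝ (Fin 2) → ℝ) (U : Set (EuclideanSpace ℝ (Fin 2)))
    (hU : IsOpen U)
    (hdiff : DifferentiableOn ℝ (gradient g) U)
    (hnorm : ∀ x ∈ U, ‖gradient g x‖ = 1)
    (R : EuclideanSpace ℝ (Fin 2) →ₗᵢ[ℝ] EuclideanSpace ℝ (Fin 2)) :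
    ∀ x ∈ U,
      (inner ℝ (gradient g x)
        (fderiv ℝ (fun y => R (gradient g y)) x (gradient g x)) : ℝ) = 0 := by
  intro x hx
  have hG : DifferentiableAt ℝ (gradient g) x := hdiff.differentiableAt (hU.mem_nhds hx)
  have hHN : fderiv ℝ (gradient g) x (gradient g x) = 0 :=
    fderiv_gradient_apply_gradient_eq_zero hG (eventually_of_mem (hU.mem_nhds hx) hnorm)
  have hF : HasFDerivAt (fun y => R (gradient g y))
      (R.toContinuousLinearMap.comp (fderiv ℝ (gradient g) x)) x :=
    R.toContinuousLinearMap.hasFDerivAt.comp x hG.hasFDerivAt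
  simp [hF.fderiv, hHN]
end

section
/- Let F : E → E and N : E → E be differentiable vector fields with (DN)(x)(N(x)) = 0 for every x ∈ E, and let C : ℝ → E satisfy the curve evolution ∂C/∂t = ⟨F(C(t)), N(C(t))⟩ • N(C(t)) for all t. Then the second time derivative of C satisfies ∂²C/∂t² (t) = ⟨(DF)(C(t))(C′(t)), N(C(t))⟩ • N(C(t)); i.e. differentiating the evolution equation in time, the terms involving the derivative of the normal field vanish and only the Jacobian of F contributes. -/
/-! Differentiating `C' = ⟨F(C), N(C)⟩ • N(C)` by the product rule, every term carrying the
derivative of `N ∘ C` drops out: by the chain rule that derivative is `DN(C)(C')`, and `C'` is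
a multiple of `N(C)`, which `DN(C)` annihilates. -/

open scoped RealInnerProductSpace

section

variable {E G : Type*}

theorem HasFDerivAt.comp_hasDerivAt_eq_zero [NormedAddCommGroup E] [NormedSpace ℝ E]
    [NormedAddCommGroup G] [NormedSpace ℝ G] {N : E → G} {L : E →L[ℝ] G} {C : ℝ → E}
    {a t : ℝ} {v : E} (hN : HasFDerivAt N L (C t)) (hv : L v = 0)
    (hC : HasDerivAt C (a • v) t) :
    HasDerivAt (fun s => N (C s)) 0 t := by
  simpa [hv, Function.comp_def] using hN.comp_hasDerivAt t hC

theorem HasDerivAt.inner_smul_of_hasDerivAt_zero [NormedAddCommGroup E] [InnerProductSpace ℝ E]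
    {u w : ℝ → E} {u' : E} {t : ℝ} (hu : HasDerivAt u u' t) (hw : HasDerivAt w 0 t) :
    HasDerivAt (fun s => ⟪u s, w s⟫ • w s) (⟪u', w t⟫ • w t) t := by
  have h := (hu.inner ℝ hw).smul hw
  rwa [inner_zero_right, zero_add, smul_zero, zero_add] at h

end

theorem second_deriv_curve_evolution_in_field_general
    {E : Type*} [NormedAddCommGroup E] [InnerProductSpace ℝ E]
    (F N : E → E) (hF : Differentiable ℝ F) (hN : Differentiable ℝ N)
    (hNN : ∀ x : E, fderiv ℝ N x (N x) = 0)
    (C : ℝ → E)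
    (hC : ∀ t : ℝ, HasDerivAt C ((inner ℝ (F (C t)) (N (C t)) : ℝ) • N (C t)) t) :
    ∀ t : ℝ, deriv (deriv C) t =
      (inner ℝ (fderiv ℝ F (C t) (deriv C t)) (N (C t)) : ℝ) • N (C t) := by
  intro t
  have hNC : HasDerivAt (fun s => N (C s)) 0 t :=
    (hN (C t)).hasFDerivAt.comp_hasDerivAt_eq_zero (hNN (C t)) (hC t)
  have hFC : HasDerivAt (fun s => F (C s)) (fderiv ℝ F (C t) (deriv C t)) t :=
    (hF (C t)).hasFDerivAt.comp_hasDerivAt t (hC t).differentiableAt.hasDerivAt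
  conv_lhs => rw [funext fun s => (hC s).deriv]
  exact (hFC.inner_smul_of_hasDerivAt_zero hNC).deriv

/-- Second time derivative of the curve evolution `∂C/∂t = ⟨F(C), N(C)⟩ N(C)`: since the
derivative of the normal field in the direction of motion vanishes, only the Jacobian of
`F` contributes, giving `∂²C/∂t² = ⟨DF(C)(C′), N(C)⟩ N(C)`. -/
theorem second_deriv_curve_evolution_in_field
    {E : Type*} [NormedAddCommGroup E] [InnerProductSpace ℝ E] [CompleteSpace E]
    (F N : E → E) (hF : Differentiable ℝ F) (hN : Differentiable ℝ N)
    (hNN : ∀ x : E, fderiv ℝ N x (N x) = 0)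
    (C : ℝ → E)
    (hC : ∀ t : ℝ, HasDerivAt C ((inner ℝ (F (C t)) (N (C t)) : ℝ) • N (C t)) t) :
    ∀ t : ℝ, deriv (deriv C) t =
      (inner ℝ (fderiv ℝ F (C t) (deriv C t)) (N (C t)) : ℝ) • N (C t) :=
  second_deriv_curve_evolution_in_field_general F N hF hN hNN C hC
end

section
/- Let g : E → ℝ be differentiable with ‖∇g(z)‖ ≤ M for all z ∈ E, where M ≥ 0, let N : ℝ → E satisfy ‖N(t)‖ ≤ 1 for all t, let f : E → E be Lipschitz with constant L > 0, and let ε > 0. Suppose x, y : ℝ → E satisfy, for all t ∈ [t₀, T], x′(t) = f(x(t)) and y′(t) = f(y(t)) + ε • (⟨∇g(y(t)), N(t)⟩ • N(t)). Then for every t ∈ [t₀, T], ‖x(t) − y(t)‖ ≤ ‖x(t₀) − y(t₀)‖ · e^{L(t−t₀)} + (εM/L)(e^{L(t−t₀)} − 1); in particular the perturbation term G(t) = ε⟨∇g(y(t)), N(t)⟩N(t) satisfies ‖G(t)‖ ≤ εM, so for small ε the modified flow behaves analogously to the original flow. -/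
/-!
Since `‖N t‖ ≤ 1`, the perturbation `ε ⟨∇g, N⟩ N` has norm at most `ε M`, so `y` is an
`ε M`-approximate trajectory of `x' = f x`, and Gronwall's inequality for approximate
trajectories of a Lipschitz vector field gives the bound.
-/

open Set NNReal

theorem norm_inner_smul_le_of_norm_le_one {E : Type*} [NormedAddCommGroup E]
    [InnerProductSpace ℝ E] (u : E) {v : E} (hv : ‖v‖ ≤ 1) :
    ‖inner ℝ u v • v‖ ≤ ‖u‖ :=
  calc ‖inner ℝ u v • v‖ = |inner ℝ u v| * ‖v‖ := by rw [norm_smul, Real.norm_eq_abs]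
    _ ≤ (‖u‖ * ‖v‖) * ‖v‖ := by gcongr; exact abs_real_inner_le_norm u v
    _ ≤ (‖u‖ * 1) * 1 := by gcongr
    _ = ‖u‖ := by ring

theorem norm_sub_le_gronwallBound_of_perturbed_ODE {E : Type*} [NormedAddCommGroup E]
    [NormedSpace ℝ E] {f : E → E} {K : ℝ≥0} (hf : LipschitzWith K f) {G : ℝ → E} {δ a b : ℝ}
    (hG : ∀ t ∈ Icc a b, ‖G t‖ ≤ δ) {x y : ℝ → E}
    (hx : ∀ t ∈ Icc a b, HasDerivAt x (f (x t)) t)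
    (hy : ∀ t ∈ Icc a b, HasDerivAt y (f (y t) + G t) t) :
    ∀ t ∈ Icc a b, ‖x t - y t‖ ≤ gronwallBound ‖x a - y a‖ K δ (t - a) := by
  have hxy := dist_le_of_approx_trajectories_ODE (v := fun _ => f) (εf := 0) (fun _ => hf)
    (fun t ht => (hx t ht).continuousAt.continuousWithinAt)
    (fun t ht => (hx t (Ico_subset_Icc_self ht)).hasDerivWithinAt)
    (fun t _ => (dist_self _).le)
    (fun t ht => (hy t ht).continuousAt.continuousWithinAt)
    (fun t ht => (hy t (Ico_subset_Icc_self ht)).hasDerivWithinAt)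
    (fun t ht => by rw [dist_eq_norm, add_sub_cancel_left]; exact hG t (Ico_subset_Icc_self ht))
    (dist_eq_norm _ _).le
  simpa only [dist_eq_norm, zero_add] using hxy

theorem modified_equilibrium_flow_error_bound_general
    {E : Type*} [NormedAddCommGroup E] [InnerProductSpace ℝ E] [CompleteSpace E]
    (g : E → ℝ)
    (M : ℝ) (hgM : ∀ z : E, ‖gradient g z‖ ≤ M)
    (N : ℝ → E) (hN : ∀ t : ℝ, ‖N t‖ ≤ 1)
    (f : E → E) (L : ℝ) (hL : 0 < L)
    (hf : ∀ a b : E, ‖f a - f b‖ ≤ L * ‖a - b‖)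
    (ε : ℝ) (hε : 0 < ε) (t₀ T : ℝ)
    (x y : ℝ → E)
    (hx : ∀ t ∈ Set.Icc t₀ T, HasDerivAt x (f (x t)) t)
    (hy : ∀ t ∈ Set.Icc t₀ T,
      HasDerivAt y (f (y t) + ε • ((inner ℝ (gradient g (y t)) (N t) : ℝ) • N t)) t) :
    (∀ t ∈ Set.Icc t₀ T,
      ‖x t - y t‖ ≤ ‖x t₀ - y t₀‖ * Real.exp (L * (t - t₀)) +
        (ε * M / L) * (Real.exp (L * (t - t₀)) - 1)) ∧
    (∀ t : ℝ, ‖ε • ((inner ℝ (gradient g (y t)) (N t) : ℝ) • N t)‖ ≤ ε * M) := by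
  have hG (t : ℝ) : ‖ε • ((inner ℝ (gradient g (y t)) (N t) : ℝ) • N t)‖ ≤ ε * M := by
    rw [norm_smul, Real.norm_of_nonneg hε.le]
    exact mul_le_mul_of_nonneg_left
      ((norm_inner_smul_le_of_norm_le_one _ (hN t)).trans (hgM _)) hε.le
  have hf_lip : LipschitzWith L.toNNReal f :=
    LipschitzWith.of_dist_le_mul fun a b => by
      simpa only [Real.coe_toNNReal L hL.le, dist_eq_norm] using hf a b
  refine ⟨fun t ht => ?_, hG⟩
  have hxy := norm_sub_le_gronwallBound_of_perturbed_ODE hf_lip (fun t _ => hG t) hx hy t ht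
  rwa [Real.coe_toNNReal L hL.le, gronwallBound_of_K_ne_0 hL.ne'] at hxy

/-- The modified Equilibrium Flow stays close to the original flow: if `‖∇g‖ ≤ M`,
`‖N t‖ ≤ 1`, `f` is `L`-Lipschitz, `x′ = f ∘ x` and
`y′ t = f (y t) + ε • (⟨∇g (y t), N t⟩ • N t)` on `[t₀, T]`, then
`‖x t − y t‖ ≤ ‖x t₀ − y t₀‖ e^{L(t−t₀)} + (εM/L)(e^{L(t−t₀)} − 1)`, and the
perturbation `G t = ε ⟨∇g (y t), N t⟩ N t` satisfies `‖G t‖ ≤ ε M`. -/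
theorem modified_equilibrium_flow_error_bound
    {E : Type*} [NormedAddCommGroup E] [InnerProductSpace ℝ E] [CompleteSpace E]
    (g : E → ℝ) (hg : Differentiable ℝ g)
    (M : ℝ) (hM : 0 ≤ M) (hgM : ∀ z : E, ‖gradient g z‖ ≤ M)
    (N : ℝ → E) (hN : ∀ t : ℝ, ‖N t‖ ≤ 1)
    (f : E → E) (L : ℝ) (hL : 0 < L)
    (hf : ∀ a b : E, ‖f a - f b‖ ≤ L * ‖a - b‖)
    (ε : ℝ) (hε : 0 < ε) (t₀ T : ℝ)
    (x y : ℝ → E)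
    (hx : ∀ t ∈ Set.Icc t₀ T, HasDerivAt x (f (x t)) t)
    (hy : ∀ t ∈ Set.Icc t₀ T,
      HasDerivAt y (f (y t) + ε • ((inner ℝ (gradient g (y t)) (N t) : ℝ) • N t)) t) :
    (∀ t ∈ Set.Icc t₀ T,
      ‖x t - y t‖ ≤ ‖x t₀ - y t₀‖ * Real.exp (L * (t - t₀)) +
        (ε * M / L) * (Real.exp (L * (t - t₀)) - 1)) ∧
    (∀ t : ℝ, ‖ε • ((inner ℝ (gradient g (y t)) (N t) : ℝ) • N t)‖ ≤ ε * M) :=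
  modified_equilibrium_flow_error_bound_general g M hgM N hN f L hL hf ε hε t₀ T x y hx hy
end
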